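/- Let σ_1, σ_2 : ℂ → ℂ be 1-Lipschitz functions with |σ_j(z)| ≤ |z| for all z. Let g_1, g_2 ∈ L¹(ℝ^d) with ‖g_j‖_1 ≤ 1, and let f_1, f_2, h_1, h_2 ∈ L²(ℝ^d) ∩ L^∞(ℝ^d) with ‖f_j‖_∞ ≤ 1 and ‖h_j‖_∞ ≤ 1. Define F = σ_1(f_1 ∗ g_1) · σ_2(f_2 ∗ g_2) and H = σ_1(h_1 ∗ g_1) · σ_2(h_2 ∗ g_2). Then ‖F − H‖_2² ≤ 2‖(f_1 − h_1) ∗ g_1‖_2² + 2‖(f_2 − h_2) ∗ g_2‖_2². -/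

import Mathlib

/-!
Adding and subtracting `σ₁ (h₁ ∗ g₁) · σ₂ (f₂ ∗ g₂)` bounds `|F - H|` pointwise by
`|σ₁ (f₁ ∗ g₁) - σ₁ (h₁ ∗ g₁)| |σ₂ (f₂ ∗ g₂)| + |σ₁ (h₁ ∗ g₁)| |σ₂ (f₂ ∗ g₂) - σ₂ (h₂ ∗ g₂)|`.
The two single factors are at most `1`, because `|σⱼ z| ≤ |z|` and Young's inequality
`‖f ∗ g‖_∞ ≤ ‖f‖_∞ ‖g‖_1`; the differences are at most `|(fⱼ - hⱼ) ∗ gⱼ|` by the Lipschitz bound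
and linearity of the convolution, which exists everywhere since `fⱼ, hⱼ ∈ L^∞` and `gⱼ ∈ L¹`.
Minkowski's inequality in `L²` and `(a + b)² ≤ 2 (a² + b²)` conclude.
-/

open MeasureTheory Real ENNReal
open scoped FourierTransform Convolution

noncomputable section

/-- Convolution of two complex-valued functions on `ℝ^d` w.r.t. Lebesgue measure. -/
def conv {d : ℕ} (f g : EuclideanSpace ℝ (Fin d) → ℂ) :
    EuclideanSpace ℝ (Fin d) → ℂ :=
  MeasureTheory.convolution f g (ContinuousLinearMap.mul ℂ ℂ) volume

lemma norm_mul_sub_mul_le_of_norm_le_one {R : Type*} [SeminormedRing R] {a b c d : R}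
    (hb : ‖b‖ ≤ 1) (hc : ‖c‖ ≤ 1) : ‖a * b - c * d‖ ≤ ‖a - c‖ + ‖b - d‖ :=
  calc ‖a * b - c * d‖ = ‖(a - c) * b + c * (b - d)‖ := by noncomm_ring
    _ ≤ ‖a - c‖ * ‖b‖ + ‖c‖ * ‖b - d‖ := norm_add_le_of_le (norm_mul_le _ _) (norm_mul_le _ _)
    _ ≤ ‖a - c‖ * 1 + 1 * ‖b - d‖ := by gcongr
    _ = ‖a - c‖ + ‖b - d‖ := by rw [mul_one, one_mul]

theorem ENNReal.add_sq_le {a b : ℝ≥0∞} : (a + b) ^ 2 ≤ 2 * (a ^ 2 + b ^ 2) := by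
  have := ENNReal.rpow_add_le_mul_rpow_add_rpow a b one_le_two
  norm_num [ENNReal.rpow_two] at this
  exact this

theorem eLpNorm_le_add_of_norm_le_add {α E F₁ F₂ : Type*} [MeasurableSpace α] {μ : Measure α}
    [NormedAddCommGroup E] [NormedAddCommGroup F₁] [NormedAddCommGroup F₂] {p : ℝ≥0∞}
    (hp : 1 ≤ p) {F : α → E} {u : α → F₁} {v : α → F₂} (hu : AEStronglyMeasurable u μ)
    (hv : AEStronglyMeasurable v μ) (h : ∀ᵐ x ∂μ, ‖F x‖ ≤ ‖u x‖ + ‖v x‖) :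
    eLpNorm F p μ ≤ eLpNorm u p μ + eLpNorm v p μ :=
  calc eLpNorm F p μ ≤ eLpNorm (fun x ↦ ‖u x‖ + ‖v x‖) p μ := eLpNorm_mono_ae_real h
    _ ≤ eLpNorm (‖u ·‖) p μ + eLpNorm (‖v ·‖) p μ := eLpNorm_add_le hu.norm hv.norm hp
    _ = eLpNorm u p μ + eLpNorm v p μ := by rw [eLpNorm_norm, eLpNorm_norm]

namespace MeasureTheory

variable {G 𝕜 : Type*} [MeasurableSpace G] [AddGroup G] {μ : Measure G}
  [NontriviallyNormedField 𝕜]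

theorem ConvolutionExistsAt.sub_distrib {E E' F : Type*} [NormedAddCommGroup E]
    [NormedAddCommGroup E'] [NormedAddCommGroup F] [NormedSpace 𝕜 E] [NormedSpace 𝕜 E']
    [NormedSpace 𝕜 F] [NormedSpace ℝ F] {L : E →L[𝕜] E' →L[𝕜] F} {f f' : G → E} {g : G → E'}
    {x : G} (hfg : ConvolutionExistsAt f g x L μ) (hfg' : ConvolutionExistsAt f' g x L μ) :
    ((f - f') ⋆[L, μ] g) x = (f ⋆[L, μ] g) x - (f' ⋆[L, μ] g) x := by
  simp only [convolution_def, L.map_sub₂, Pi.sub_apply, integral_sub hfg hfg']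

theorem AEStronglyMeasurable.convolution [MeasurableAdd₂ G] [MeasurableNeg G] [SFinite μ]
    [μ.IsAddRightInvariant] {E E' F : Type*} [NormedAddCommGroup E]
    [NormedAddCommGroup E'] [NormedAddCommGroup F] [NormedSpace 𝕜 E] [NormedSpace 𝕜 E']
    [NormedSpace 𝕜 F] [NormedSpace ℝ F] (L : E →L[𝕜] E' →L[𝕜] F) {f : G → E} {g : G → E'}
    (hf : AEStronglyMeasurable f μ) (hg : AEStronglyMeasurable g μ) :
    AEStronglyMeasurable (f ⋆[L, μ] g) μ :=
  (hf.convolution_integrand L hg).integral_prod_right'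

variable [MeasurableAdd₂ G] [MeasurableNeg G] [μ.IsAddLeftInvariant] [μ.IsNegInvariant]
  {f g : G → 𝕜}

theorem enorm_convolution_mul_le [SFinite μ] [NormedSpace ℝ 𝕜] (hg : AEStronglyMeasurable g μ)
    (x : G) :
    ‖convolution f g (ContinuousLinearMap.mul 𝕜 𝕜) μ x‖ₑ ≤ eLpNorm f ∞ μ * eLpNorm g 1 μ := by
  rw [convolution_mul]
  calc ‖∫ t, f t * g (x - t) ∂μ‖ₑ ≤ ∫⁻ t, ‖f t‖ₑ * ‖g (x - t)‖ₑ ∂μ := by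
        simpa only [enorm_mul] using
          enorm_integral_le_lintegral_enorm (μ := μ) fun t ↦ f t * g (x - t)
    _ ≤ ∫⁻ t, eLpNorm f ∞ μ * ‖g (x - t)‖ₑ ∂μ := by
        refine lintegral_mono_ae ?_
        filter_upwards [ae_le_eLpNormEssSup (f := f) (μ := μ)] with t ht
        rw [eLpNorm_exponent_top]
        gcongr
    _ = eLpNorm f ∞ μ * eLpNorm g 1 μ := by
        rw [lintegral_const_mul'' _ ?_, lintegral_sub_left_eq_self (‖g ·‖ₑ),
          eLpNorm_one_eq_lintegral_enorm]
        exact (hg.comp_quasiMeasurePreserving (quasiMeasurePreserving_sub_left μ x)).enorm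

theorem MemLp.convolutionExistsAt_mul (hf : MemLp f ∞ μ) (hg : Integrable g μ) (x : G) :
    ConvolutionExistsAt f g x (ContinuousLinearMap.mul 𝕜 𝕜) μ :=
  (hg.comp_sub_left x).mul_of_top_right hf

end MeasureTheory

section Conv

variable {d : ℕ} {f h g : EuclideanSpace ℝ (Fin d) → ℂ}

theorem norm_conv_le_one (hf : eLpNorm f ∞ volume ≤ 1) (hg : AEStronglyMeasurable g volume)
    (hg1 : eLpNorm g 1 volume ≤ 1) (x : EuclideanSpace ℝ (Fin d)) : ‖conv f g x‖ ≤ 1 := by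
  have := (enorm_convolution_mul_le (f := f) hg x).trans (mul_le_one' hf hg1)
  rwa [← ofReal_norm, ENNReal.ofReal_le_one] at this

theorem conv_sub_apply (hf : MemLp f ∞ volume) (hh : MemLp h ∞ volume) (hg : Integrable g)
    (x : EuclideanSpace ℝ (Fin d)) : conv (f - h) g x = conv f g x - conv h g x :=
  (hf.convolutionExistsAt_mul hg x).sub_distrib (hh.convolutionExistsAt_mul hg x)

end Conv

/-- Multiplication-aggregation Lipschitz estimate (Lemma 3.4). -/
theorem stmt_3 (d : ℕ) (σ₁ σ₂ : ℂ → ℂ)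
    (hσ₁ : LipschitzWith 1 σ₁) (hσ₂ : LipschitzWith 1 σ₂)
    (hσ₁' : ∀ z, ‖σ₁ z‖ ≤ ‖z‖) (hσ₂' : ∀ z, ‖σ₂ z‖ ≤ ‖z‖)
    (g₁ g₂ f₁ f₂ h₁ h₂ : EuclideanSpace ℝ (Fin d) → ℂ)
    (hg₁ : Integrable g₁) (hg₂ : Integrable g₂)
    (hg₁1 : eLpNorm g₁ 1 volume ≤ 1) (hg₂1 : eLpNorm g₂ 1 volume ≤ 1)
    (hf₁ : MemLp f₁ 2 volume) (hf₂ : MemLp f₂ 2 volume)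
    (hh₁ : MemLp h₁ 2 volume) (hh₂ : MemLp h₂ 2 volume)
    (hf₁i : eLpNorm f₁ ⊤ volume ≤ 1) (hf₂i : eLpNorm f₂ ⊤ volume ≤ 1)
    (hh₁i : eLpNorm h₁ ⊤ volume ≤ 1) (hh₂i : eLpNorm h₂ ⊤ volume ≤ 1) :
    eLpNorm (fun x => σ₁ (conv f₁ g₁ x) * σ₂ (conv f₂ g₂ x)
        - σ₁ (conv h₁ g₁ x) * σ₂ (conv h₂ g₂ x)) 2 volume ^ 2 ≤
      2 * eLpNorm (conv (f₁ - h₁) g₁) 2 volume ^ 2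
        + 2 * eLpNorm (conv (f₂ - h₂) g₂) 2 volume ^ 2 := by
  have memLp_top {f : EuclideanSpace ℝ (Fin d) → ℂ} (hf : MemLp f 2 volume)
      (hfi : eLpNorm f ⊤ volume ≤ 1) : MemLp f ∞ volume := ⟨hf.1, hfi.trans_lt one_lt_top⟩
  have lipschitz {σ : ℂ → ℂ} (hσ : LipschitzWith 1 σ) (a c : ℂ) : ‖σ a - σ c‖ ≤ ‖a - c‖ := by
    simpa using hσ.norm_sub_le a c
  have pointwise : ∀ x, ‖σ₁ (conv f₁ g₁ x) * σ₂ (conv f₂ g₂ x)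
      - σ₁ (conv h₁ g₁ x) * σ₂ (conv h₂ g₂ x)‖ ≤
      ‖conv (f₁ - h₁) g₁ x‖ + ‖conv (f₂ - h₂) g₂ x‖ := by
    intro x
    rw [conv_sub_apply (memLp_top hf₁ hf₁i) (memLp_top hh₁ hh₁i) hg₁,
      conv_sub_apply (memLp_top hf₂ hf₂i) (memLp_top hh₂ hh₂i) hg₂]
    refine (norm_mul_sub_mul_le_of_norm_le_one ?_ ?_).trans
      (add_le_add (lipschitz hσ₁ _ _) (lipschitz hσ₂ _ _))
    · exact (hσ₂' _).trans (norm_conv_le_one hf₂i hg₂.1 hg₂1 x)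
    · exact (hσ₁' _).trans (norm_conv_le_one hh₁i hg₁.1 hg₁1 x)
  calc _ ≤ (eLpNorm (conv (f₁ - h₁) g₁) 2 volume + eLpNorm (conv (f₂ - h₂) g₂) 2 volume) ^ 2 := by
        gcongr
        exact eLpNorm_le_add_of_norm_le_add one_le_two ((hf₁.1.sub hh₁.1).convolution _ hg₁.1)
          ((hf₂.1.sub hh₂.1).convolution _ hg₂.1) (ae_of_all _ pointwise)
    _ ≤ _ := ENNReal.add_sq_le.trans_eq (mul_add _ _ _)

end
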